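/- arXiv:2102.03004 — 3 statements merged into one kernel-verified Lean document; each statement's English description precedes it below -/
import Mathlib

section
/- Fix q ∈ (1,2). For every θ ∈ (0,1], the equation e^{−q x} = 1 − q x / (1 + (q−1)θ) has a positive real root, its set of positive roots is bounded and attains a maximum φ(θ), and this largest positive root satisfies φ(θ) ≤ θ. Equivalently, the drift function f(θ) = θ − φ(θ) is non-negative on (0,1]. -/
/-!
Write `a = 1 + (q - 1) θ` and `g x = exp (-q x) - (1 - q x / a)`, so that the roots are the
zeros of `g`. Since `g x = (q / a - q) x + O(x²)` with `q / a - q < 0`, `g` is negative just to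
the right of `0`. The Padé bound `exp y < (2 + y) / (2 - y)` together with `q ≤ 2` gives
`g θ > 0`, and the tangent line of `exp` at `-q θ` shows that `g` does not drop below `g θ` on
`[θ, ∞)`, because its slope there is at least `q / a - q exp (-q θ) ≥ 0`. Hence there is a root
in `(0, θ)`, no root in `[θ, ∞)`, and the roots in `[c, θ]` for a root `c` form a nonempty
compact set whose maximum is the largest root.
-/

open Real Set

theorem exists_isGreatest_pos_eq {f g : ℝ → ℝ} (hf : Continuous f) (hg : Continuous g)
    {c b : ℝ} (hc : 0 < c) (hfc : f c = g c) (hb : ∀ x, 0 < x → f x = g x → x ≤ b) :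
    ∃ φ, IsGreatest {x | 0 < x ∧ f x = g x} φ := by
  have hK : IsCompact {x ∈ Icc c b | f x = g x} :=
    isCompact_Icc.inter_right (isClosed_eq hf hg)
  obtain ⟨φ, ⟨⟨hcφ, -⟩, hφ⟩, hφmax⟩ :=
    hK.exists_isGreatest ⟨c, ⟨le_rfl, hb c hc hfc⟩, hfc⟩
  refine ⟨φ, ⟨hc.trans_le hcφ, hφ⟩, fun x ⟨hx, hfx⟩ => ?_⟩
  rcases le_total x c with hxc | hcx
  · exact hxc.trans hcφ
  · exact hφmax ⟨⟨hcx, hb x hx hfx⟩, hfx⟩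

theorem Real.exp_mul_mul_one_sub_lt {q θ : ℝ} (hq : 0 < q) (hq2 : q ≤ 2) (hθ : 0 < θ) :
    exp (q * θ) * (1 - θ) < 1 + (q - 1) * θ := by
  rcases lt_or_ge θ 1 with hθ1 | hθ1
  · have hy : q * θ < 2 := by nlinarith
    have hpade := exp_lt_two_add_div_two_sub (mul_pos hq hθ) hy
    rw [lt_div_iff₀ (by linarith)] at hpade
    -- `(1 - θ) (2 + q θ) ≤ (1 + (q - 1) θ) (2 - q θ)`, the difference being `q (2 - q) θ²`
    nlinarith [exp_pos (q * θ), mul_nonneg (mul_nonneg hq.le (sub_nonneg.2 hq2)) (sq_nonneg θ)]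
  · have hexp : 0 ≤ exp (q * θ) - 1 := by linarith [add_one_le_exp (q * θ), mul_pos hq hθ]
    nlinarith [mul_nonneg hexp (sub_nonneg.2 hθ1)]

noncomputable def rootDefect (q a x : ℝ) : ℝ :=
  exp (-(q * x)) - (1 - q * x / a)

namespace rootDefect

variable {q a : ℝ}

theorem continuous : Continuous (rootDefect q a) := by
  unfold rootDefect
  fun_prop

theorem eq_zero_iff {x : ℝ} : rootDefect q a x = 0 ↔ exp (-(q * x)) = 1 - q * x / a :=
  sub_eq_zero

theorem exists_pos_neg (hq : 0 < q) (ha : 1 < a) : ∃ x, 0 < x ∧ rootDefect q a x < 0 := by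
  set y := (a - 1) / (2 * a)
  have ha0 : 0 < a := by linarith
  have hy0 : 0 < y := by positivity
  have hya : 2 * a * y = a - 1 := mul_div_cancel₀ _ (by positivity)
  have hy1 : y ≤ 1 := by rw [div_le_one (by positivity)]; linarith
  have hexp : exp (-y) - 1 + y ≤ y ^ 2 := by
    have := abs_exp_sub_one_sub_id_le (x := -y) (by rwa [abs_neg, abs_of_pos hy0])
    rw [neg_sq] at this
    linarith [le_abs_self (exp (-y) - 1 - -y)]
  -- `y` is chosen so that `y / a = y - 2 y²`, whence `g (y / q) ≤ y² - 2 y² < 0`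
  refine ⟨y / q, div_pos hy0 hq, ?_⟩
  have hyq : q * (y / q) = y := mul_div_cancel₀ y hq.ne'
  have hdiv : y / a = y - y ^ 2 * 2 := by
    rw [div_eq_iff ha0.ne']
    linear_combination y * hya
  rw [rootDefect, hyq]
  linarith [pow_pos hy0 2]

theorem le_of_le {θ x : ℝ} (hq : 0 ≤ q) (ha : 0 < a) (haθ : a ≤ exp (q * θ)) (hθx : θ ≤ x) :
    rootDefect q a θ ≤ rootDefect q a x := by
  have htangent : exp (-(q * θ)) * (1 - q * (x - θ)) ≤ exp (-(q * x)) := by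
    have h := add_one_le_exp (-(q * (x - θ)))
    calc exp (-(q * θ)) * (1 - q * (x - θ))
        ≤ exp (-(q * θ)) * exp (-(q * (x - θ))) := by gcongr; linarith
      _ = exp (-(q * x)) := by rw [← exp_add]; ring_nf
  have hslope : exp (-(q * θ)) ≤ 1 / a := by
    rw [exp_neg, one_div]
    exact inv_anti₀ ha haθ
  have hstep : 0 ≤ q * (x - θ) := mul_nonneg hq (sub_nonneg.2 hθx)
  have hgain := mul_le_mul_of_nonneg_left hslope hstep
  rw [mul_one_div] at hgain
  have hsplit : q * x / a = q * θ / a + q * (x - θ) / a := by ring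
  unfold rootDefect
  linarith

theorem pos_of_le {θ x : ℝ} (hq1 : 1 < q) (hq2 : q ≤ 2) (hθ : 0 < θ) (hθx : θ ≤ x) :
    0 < rootDefect q (1 + (q - 1) * θ) x := by
  have hq : 0 < q := by linarith
  have ha : 0 < 1 + (q - 1) * θ := by nlinarith
  have haθ : 1 + (q - 1) * θ ≤ exp (q * θ) := by linarith [add_one_le_exp (q * θ)]
  refine lt_of_lt_of_le ?_ (le_of_le hq.le ha haθ hθx)
  have hkey := exp_mul_mul_one_sub_lt hq hq2 hθ
  have hone : 1 - q * θ / (1 + (q - 1) * θ) = (1 - θ) / (1 + (q - 1) * θ) := by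
    rw [eq_div_iff ha.ne', sub_mul, div_mul_cancel₀ _ ha.ne']
    ring
  rw [rootDefect, hone, exp_neg, sub_pos, div_lt_iff₀ ha, ← div_eq_inv_mul,
    lt_div_iff₀ (exp_pos _)]
  linarith

end rootDefect

theorem drift_function_nonneg_general (q : ℝ) (hq1 : 1 < q) (hq2 : q < 2)
    (θ : ℝ) (hθ0 : 0 < θ) :
    (∃ x : ℝ, 0 < x ∧ Real.exp (-(q * x)) = 1 - q * x / (1 + (q - 1) * θ)) ∧
    BddAbove {x : ℝ | 0 < x ∧ Real.exp (-(q * x)) = 1 - q * x / (1 + (q - 1) * θ)} ∧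
    ∃ φ : ℝ,
      IsGreatest {x : ℝ | 0 < x ∧ Real.exp (-(q * x)) = 1 - q * x / (1 + (q - 1) * θ)} φ ∧
      φ ≤ θ := by
  set a := 1 + (q - 1) * θ
  have ha : 1 < a := by nlinarith
  have hpos : ∀ x, θ ≤ x → 0 < rootDefect q a x :=
    fun x => rootDefect.pos_of_le hq1 hq2.le hθ0
  have hroot_lt : ∀ x, 0 < x → exp (-(q * x)) = 1 - q * x / a → x < θ := fun x _ hx =>
    not_le.1 fun hθx => (hpos x hθx).ne' (rootDefect.eq_zero_iff.2 hx)
  obtain ⟨x₁, hx₁, hgx₁⟩ := rootDefect.exists_pos_neg (q := q) (by linarith) ha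
  have hx₁θ : x₁ ≤ θ := not_lt.1 fun h => (hpos x₁ h.le).not_gt hgx₁
  obtain ⟨c, hc, hgc⟩ := intermediate_value_Icc hx₁θ rootDefect.continuous.continuousOn
    ⟨hgx₁.le, (hpos θ le_rfl).le⟩
  have hc0 : 0 < c := hx₁.trans_le hc.1
  have hceq := rootDefect.eq_zero_iff.1 hgc
  obtain ⟨φ, hφ⟩ := exists_isGreatest_pos_eq (by fun_prop) (by fun_prop) hc0 hceq
    fun x hx hfx => (hroot_lt x hx hfx).le
  exact ⟨⟨c, hc0, hceq⟩, hφ.bddAbove, φ, hφ, (hroot_lt φ hφ.1.1 hφ.1.2).le⟩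

/-- For `q ∈ (1,2)` and `θ ∈ (0,1]`, the equation
`e^{−qx} = 1 − qx/(1+(q−1)θ)` has a positive root, its set of positive roots is bounded and
attains a maximum `φ(θ)`, and `φ(θ) ≤ θ`; i.e. the drift `f(θ) = θ − φ(θ)` is non-negative. -/
theorem drift_function_nonneg (q : ℝ) (hq1 : 1 < q) (hq2 : q < 2)
    (θ : ℝ) (hθ0 : 0 < θ) (hθ1 : θ ≤ 1) :
    (∃ x : ℝ, 0 < x ∧ Real.exp (-(q * x)) = 1 - q * x / (1 + (q - 1) * θ)) ∧
    BddAbove {x : ℝ | 0 < x ∧ Real.exp (-(q * x)) = 1 - q * x / (1 + (q - 1) * θ)} ∧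
    ∃ φ : ℝ,
      IsGreatest {x : ℝ | 0 < x ∧ Real.exp (-(q * x)) = 1 - q * x / (1 + (q - 1) * θ)} φ ∧
      φ ≤ θ :=
  drift_function_nonneg_general q hq1 hq2 θ hθ0
end

section
/- Let B > 1 be a constant such that x ≥ (log x)^{48} for all x ≥ B^6, let δ > 0, and for n ∈ ℕ define g_0(n) = δ n^{1/3} and g_{i+1}(n) = B (log g_i(n))^8 for i ≥ 0; let K = K(n) be the least integer with g_K(n) ≤ B^6. Then for every n with g_0(n) > B^6 and every integer j with 0 ≤ j < K: (i) for every real c with 0 < c ≤ 4 log B, ∏_{i=0}^{j} (1 − c/log g_i(n)) ≥ 1 − 1.5 c / log g_j(n); and (ii) ∑_{i=0}^{j} 1/log g_i(n) ≤ 1.5 / log g_j(n). -/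
/-!
Write `L i = log (g i)`. The recursion gives `L (i + 1) = log B + 8 log (L i)`; the hypothesis on `B`,
applied at `g i > B^6`, gives `8 log (L i) ≤ L i / 6`, and `g (i + 1) > B^6` gives `log B < L (i + 1) / 6`.
Together `5 L (i + 1) ≤ L i`, so the terms `1 / L i` grow at least geometrically with ratio `5` up to
index `j`, and their sum is at most `(5/4) / L j`. Part (i) follows from the Weierstrass inequality
`∏ (1 - aᵢ) ≥ 1 - ∑ aᵢ` with `aᵢ = c / L i ∈ [0, 1]`, since `c ≤ 4 log B < L i`.
-/

open Real Finset

theorem Finset.one_sub_sum_le_prod_one_sub {ι R : Type*} [CommRing R] [LinearOrder R]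
    [IsStrictOrderedRing R] (s : Finset ι) {a : ι → R}
    (h0 : ∀ i ∈ s, 0 ≤ a i) (h1 : ∀ i ∈ s, a i ≤ 1) :
    1 - ∑ i ∈ s, a i ≤ ∏ i ∈ s, (1 - a i) := by
  induction s using Finset.cons_induction with
  | empty => simp
  | cons x s _ ih =>
    simp only [mem_cons, forall_eq_or_imp] at h0 h1
    rw [sum_cons, prod_cons]
    have hS : 0 ≤ ∑ i ∈ s, a i := sum_nonneg h0.2
    calc 1 - (a x + ∑ i ∈ s, a i) ≤ (1 - a x) * (1 - ∑ i ∈ s, a i) := by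
          nlinarith [mul_nonneg h0.1 hS]
      _ ≤ (1 - a x) * ∏ i ∈ s, (1 - a i) :=
          mul_le_mul_of_nonneg_left (ih h0.2 h1.2) (sub_nonneg.2 h1.1)

theorem sum_range_one_div_le_of_mul_succ_le {L : ℕ → ℝ} {r : ℝ} (hr : 1 < r) :
    ∀ {j : ℕ}, 0 < L j → (∀ i < j, r * L (i + 1) ≤ L i) →
      ∑ i ∈ range (j + 1), 1 / L i ≤ r / (r - 1) / L j
  | 0, hL, _ => by
    rw [sum_range_one]
    gcongr
    rw [le_div_iff₀ (by linarith)]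
    linarith
  | j + 1, hL, hstep => by
    have hrL : r * L (j + 1) ≤ L j := hstep j j.lt_succ_self
    have hLj : 0 < L j := lt_of_lt_of_le (by positivity) hrL
    have ih := sum_range_one_div_le_of_mul_succ_le hr hLj fun i hi => hstep i (by omega)
    have hinv : 1 / L j ≤ 1 / (r * L (j + 1)) := one_div_le_one_div_of_le (by positivity) hrL
    rw [sum_range_succ]
    calc ∑ i ∈ range (j + 1), 1 / L i + 1 / L (j + 1)
        ≤ r / (r - 1) * (1 / (r * L (j + 1))) + 1 / L (j + 1) := by
          rw [div_eq_mul_one_div _ (L j)] at ih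
          gcongr
          exact ih.trans (mul_le_mul_of_nonneg_left hinv (by positivity))
      _ = r / (r - 1) / L (j + 1) := by
          have : r - 1 ≠ 0 := by linarith
          field_simp
          ring

theorem five_mul_log_mul_log_pow_le {B x : ℝ} (hB : 0 < B) (hx0 : log x ≠ 0)
    (hx : log x ^ 48 ≤ x) (h6 : 6 * log B < log (B * log x ^ 8)) :
    5 * log (B * log x ^ 8) ≤ log x := by
  have h48 : 48 * log (log x) ≤ log x := by
    have := log_le_log (by positivity) hx
    rwa [log_pow, Nat.cast_ofNat] at this
  rw [log_mul hB.ne' (pow_ne_zero 8 hx0), log_pow, Nat.cast_ofNat] at h6 ⊢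
  linarith

theorem g_sequence_estimates_general (B : ℝ) (hB : 1 < B)
    (hBx : ∀ x : ℝ, B ^ 6 ≤ x → Real.log x ^ 48 ≤ x)
    (g : ℕ → ℝ)
    (hgrec : ∀ i : ℕ, g (i + 1) = B * Real.log (g i) ^ 8)
    (K : ℕ) (hKleast : ∀ i : ℕ, i < K → B ^ 6 < g i) :
    ∀ j : ℕ, j < K →
      (∀ c : ℝ, 0 < c → c ≤ 4 * Real.log B →
        1 - 1.5 * c / Real.log (g j) ≤
          ∏ i ∈ Finset.range (j + 1), (1 - c / Real.log (g i))) ∧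
      (∑ i ∈ Finset.range (j + 1), 1 / Real.log (g i)) ≤ 1.5 / Real.log (g j) := by
  intro j hj
  have hlogB : 0 < log B := log_pos hB
  have hlog_gt : ∀ i < K, 6 * log B < log (g i) := fun i hi => by
    simpa [log_pow] using log_lt_log (by positivity) (hKleast i hi)
  have hlog_pos : ∀ i ≤ j, 0 < log (g i) := fun i hi => by linarith [hlog_gt i (by omega)]
  have hstep : ∀ i < j, 5 * log (g (i + 1)) ≤ log (g i) := fun i hi => by
    have h6 := hlog_gt (i + 1) (by omega)
    rw [hgrec] at h6 ⊢
    exact five_mul_log_mul_log_pow_le (by positivity) (hlog_pos i hi.le).ne'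
      (hBx _ (hKleast i (by omega)).le) h6
  have hsum : ∑ i ∈ range (j + 1), 1 / log (g i) ≤ 1.5 / log (g j) := by
    have := hlog_pos j le_rfl
    refine (sum_range_one_div_le_of_mul_succ_le (r := 5) (by norm_num) this hstep).trans ?_
    gcongr
    norm_num
  refine ⟨fun c hc hcB => ?_, hsum⟩
  have hterm_le_one : ∀ i ∈ range (j + 1), c / log (g i) ≤ 1 := fun i hi => by
    have := mem_range_succ_iff.1 hi
    rw [div_le_one (hlog_pos i this)]
    linarith [hlog_gt i (by omega)]
  calc 1 - 1.5 * c / log (g j) = 1 - c * (1.5 / log (g j)) := by ring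
    _ ≤ 1 - c * ∑ i ∈ range (j + 1), 1 / log (g i) := by gcongr
    _ = 1 - ∑ i ∈ range (j + 1), c / log (g i) := by simp only [mul_sum, mul_one_div]
    _ ≤ ∏ i ∈ range (j + 1), (1 - c / log (g i)) :=
      one_sub_sum_le_prod_one_sub _
        (fun i hi => div_nonneg hc.le (hlog_pos i (mem_range_succ_iff.1 hi)).le) hterm_le_one

/-- Elementary estimates for the recursively defined sequence
`g_0(n) = δ n^{1/3}`, `g_{i+1}(n) = B (log g_i(n))^8`, where `B > 1` satisfies
`x ≥ (log x)^{48}` for all `x ≥ B^6`, and `K` is the least index with `g_K(n) ≤ B^6`. -/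
theorem g_sequence_estimates (B δ : ℝ) (hB : 1 < B)
    (hBx : ∀ x : ℝ, B ^ 6 ≤ x → Real.log x ^ 48 ≤ x) (hδ : 0 < δ)
    (n : ℕ) (g : ℕ → ℝ)
    (hg0 : g 0 = δ * (n : ℝ) ^ ((1 : ℝ) / 3))
    (hgrec : ∀ i : ℕ, g (i + 1) = B * Real.log (g i) ^ 8)
    (K : ℕ) (hK : g K ≤ B ^ 6) (hKleast : ∀ i : ℕ, i < K → B ^ 6 < g i)
    (hstart : B ^ 6 < g 0) :
    ∀ j : ℕ, j < K →
      (∀ c : ℝ, 0 < c → c ≤ 4 * Real.log B →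
        1 - 1.5 * c / Real.log (g j) ≤
          ∏ i ∈ Finset.range (j + 1), (1 - c / Real.log (g i))) ∧
      (∑ i ∈ Finset.range (j + 1), 1 / Real.log (g i)) ≤ 1.5 / Real.log (g j) :=
  g_sequence_estimates_general B hB hBx g hgrec K hKleast
end

section
/- Let A > 0 and let A ≤ c_1, c_2, …, c_n ≤ 4A be positive integers, and let r ∈ (0, 1/2]. Let X_1, …, X_n be independent random variables with P[X_i = c_i] = r, P[X_i = −c_i] = r and P[X_i = 0] = 1 − 2r. Let S_k = Σ_{i=1}^k X_i and M_n = max{S_1, …, S_n}. Then for every real y ≥ 0, P[M_n ≥ y] ≥ 2 P[S_n ≥ y + 8A + 1]. -/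
/-! Reflection principle. Reflect the walk at the first time `τ ∈ [1, n]` with `S_τ ≥ y`, that
is, flip the signs of all later steps. The reflected path has the same first passage time, so
reflection is a weight-preserving involution and maps paths with `S_n ≥ y + 8A + 1` injectively
to paths that also reach `y`. Since the walk starts at `0 ≤ y` and moves by at most `4A`,
`S_τ ≤ y + 4A`, so the reflected endpoint `2 S_τ - S_n ≤ y - 1` lies outside the original event;
the event and its image are therefore disjoint, of equal weight, inside `{M_n ≥ y}`. -/

open scoped BigOperators

attribute [local instance] Classical.propDecidable

noncomputable section

/-- The probability weight of a sign pattern `ε` for the lazy symmetric walk with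
`P[X_i = c_i] = P[X_i = -c_i] = r` and `P[X_i = 0] = 1 - 2r`. -/
def signWeight {n : ℕ} (r : ℝ) (ε : Fin n → SignType) : ℝ :=
  ∏ i_ : Fin n, if ε i_ = 0 then 1 - 2 * r else r

/-- The `k`-th partial sum `S_k = Σ_{i < k} ε_i c_i` of the walk. -/
def walkSum {n : ℕ} (c : Fin n → ℕ) (ε : Fin n → SignType) (k : ℕ) : ℤ :=
  ∑ i_ ∈ Finset.univ.filter (fun i_ : Fin n => (i_ : ℕ) < k), (ε i_ : ℤ) * (c i_ : ℤ)

open MeasureTheory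

theorem MeasureTheory.hittingBtwn_eq_of_forall_le_hittingBtwn {Ω β ι : Type*}
    [ConditionallyCompleteLinearOrder ι] [WellFoundedLT ι] {u : ι → Ω → β} {s : Set β}
    {n m : ι} {ω ω' : Ω} (h : ∀ i ≤ hittingBtwn u s n m ω, u i ω' = u i ω) :
    hittingBtwn u s n m ω' = hittingBtwn u s n m ω := by
  apply le_antisymm
  · by_cases hex : ∃ j ∈ Set.Icc n m, u j ω ∈ s
    · refine hittingBtwn_le_of_mem (le_hittingBtwn_of_exists hex) (hittingBtwn_le ω) ?_
      rw [h _ le_rfl]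
      exact hittingBtwn_mem_set hex
    · simp only [hittingBtwn, if_neg hex]
      exact hittingBtwn_le ω'
  · by_contra! hlt
    have hm : hittingBtwn u s n m ω' < m := hlt.trans_le (hittingBtwn_le ω)
    have hnm : n ≤ m := by
      by_contra! hmn
      exact hm.ne (hittingBtwn_of_lt hmn)
    have hmem := hittingBtwn_mem_set_of_hittingBtwn_lt hm
    rw [h _ hlt.le] at hmem
    exact notMem_of_lt_hittingBtwn hlt (le_hittingBtwn hnm ω') hmem

theorem Finset.two_nsmul_sum_le_sum_of_injOn {ι M : Type*} [AddCommMonoid M] [PartialOrder M]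
    [IsOrderedAddMonoid M] {s t : Finset ι} {f : ι → ι} {w : ι → M} (hst : s ⊆ t)
    (hf : Set.InjOn f s) (hft : ∀ x ∈ s, f x ∈ t \ s) (hw : ∀ x ∈ s, w (f x) = w x)
    (hw0 : ∀ x ∈ t, 0 ≤ w x) :
    2 • ∑ x ∈ s, w x ≤ ∑ x ∈ t, w x := by
  classical
  have himage : ∑ x ∈ s.image f, w x = ∑ x ∈ s, w x := by
    rw [Finset.sum_image hf]
    exact Finset.sum_congr rfl hw
  have hdisj : Disjoint s (s.image f) := by
    rw [Finset.disjoint_right]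
    rintro _ hx
    obtain ⟨x, hxs, rfl⟩ := Finset.mem_image.mp hx
    exact (Finset.mem_sdiff.mp (hft x hxs)).2
  have hsub : s ∪ s.image f ⊆ t := by
    refine Finset.union_subset hst fun _ hx => ?_
    obtain ⟨x, hxs, rfl⟩ := Finset.mem_image.mp hx
    exact (Finset.mem_sdiff.mp (hft x hxs)).1
  calc 2 • ∑ x ∈ s, w x = ∑ x ∈ s ∪ s.image f, w x := by
        rw [Finset.sum_union hdisj, himage, two_nsmul]
    _ ≤ ∑ x ∈ t, w x := Finset.sum_le_sum_of_subset_of_nonneg hsub fun x hx _ => hw0 x hx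

section Walk

variable {n : ℕ}

theorem walkSum_zero (c : Fin n → ℕ) (ε : Fin n → SignType) : walkSum c ε 0 = 0 := by
  simp [walkSum]

theorem walkSum_succ (c : Fin n → ℕ) (ε : Fin n → SignType) {k : ℕ} (hk : k < n) :
    walkSum c ε (k + 1) = walkSum c ε k + ε ⟨k, hk⟩ * c ⟨k, hk⟩ := by
  have hfilter : Finset.univ.filter (fun i : Fin n => (i : ℕ) < k + 1) =
      insert ⟨k, hk⟩ (Finset.univ.filter fun i : Fin n => (i : ℕ) < k) := by
    ext i
    simp only [Finset.mem_filter, Finset.mem_univ, true_and, Finset.mem_insert, Fin.ext_iff]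
    omega
  rw [walkSum, hfilter, Finset.sum_insert (by simp), add_comm]
  rfl

theorem signWeight_nonneg {r : ℝ} (hr0 : 0 ≤ r) (hr1 : r ≤ 1 / 2) (ε : Fin n → SignType) :
    0 ≤ signWeight r ε :=
  Finset.prod_nonneg fun i _ => by split_ifs <;> linarith

def reflectFrom (t : ℕ) (ε : Fin n → SignType) : Fin n → SignType :=
  fun i => if (i : ℕ) < t then ε i else -ε i

theorem reflectFrom_involutive (t : ℕ) : Function.Involutive (reflectFrom (n := n) t) := by
  intro ε
  funext i
  by_cases hi : (i : ℕ) < t <;> simp [reflectFrom, hi]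

theorem signWeight_reflectFrom (r : ℝ) (t : ℕ) (ε : Fin n → SignType) :
    signWeight r (reflectFrom t ε) = signWeight r ε := by
  refine Finset.prod_congr rfl fun i _ => ?_
  by_cases hi : (i : ℕ) < t <;> simp [reflectFrom, hi]

theorem walkSum_reflectFrom_of_le (c : Fin n → ℕ) (ε : Fin n → SignType) {t k : ℕ}
    (hk : k ≤ t) : walkSum c (reflectFrom t ε) k = walkSum c ε k := by
  refine Finset.sum_congr rfl fun i hi => ?_
  have hit : (i : ℕ) < t := ((Finset.mem_filter.mp hi).2).trans_le hk
  simp [reflectFrom, hit]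

theorem walkSum_reflectFrom_add_walkSum (c : Fin n → ℕ) (ε : Fin n → SignType) {t k : ℕ}
    (ht : t ≤ k) : walkSum c (reflectFrom t ε) k + walkSum c ε k = 2 * walkSum c ε t := by
  simp only [walkSum, Finset.sum_filter, Finset.mul_sum, ← Finset.sum_add_distrib]
  refine Finset.sum_congr rfl fun i _ => ?_
  by_cases hit : (i : ℕ) < t
  · simp only [reflectFrom, hit, hit.trans_le ht, ↓reduceIte]
    ring
  · by_cases hik : (i : ℕ) < k <;> simp [reflectFrom, hit, hik]

def firstPassage (c : Fin n → ℕ) (y : ℝ) : (Fin n → SignType) → ℕ :=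
  hittingBtwn (fun k ε => (walkSum c ε k : ℝ)) (Set.Ici y) 1 n

def reflectAtFirstPassage (c : Fin n → ℕ) (y : ℝ) (ε : Fin n → SignType) : Fin n → SignType :=
  reflectFrom (firstPassage c y ε) ε

variable {c : Fin n → ℕ} {y : ℝ} {ε : Fin n → SignType}

theorem firstPassage_spec (h : ∃ k, 1 ≤ k ∧ k ≤ n ∧ y ≤ (walkSum c ε k : ℝ)) :
    firstPassage c y ε ∈ Set.Icc 1 n ∧
      (walkSum c ε (firstPassage c y ε) : ℝ) ∈ Set.Ici y := by
  obtain ⟨k, hk1, hkn, hky⟩ := h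
  have hex : ∃ j ∈ Set.Icc 1 n, (walkSum c ε j : ℝ) ∈ Set.Ici y := ⟨k, ⟨hk1, hkn⟩, hky⟩
  exact ⟨⟨le_hittingBtwn_of_exists hex, hittingBtwn_le ε⟩,
    hittingBtwn_mem_set (u := fun k ε => (walkSum c ε k : ℝ)) hex⟩

theorem walkSum_firstPassage_le {B : ℝ} (hy : 0 ≤ y) (hc : ∀ i, (c i : ℝ) ≤ B)
    (h : ∃ k, 1 ≤ k ∧ k ≤ n ∧ y ≤ (walkSum c ε k : ℝ)) :
    (walkSum c ε (firstPassage c y ε) : ℝ) ≤ y + B := by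
  obtain ⟨⟨hτ1, hτn⟩, -⟩ := firstPassage_spec h
  obtain ⟨k, hk⟩ : ∃ k, firstPassage c y ε = k + 1 := ⟨firstPassage c y ε - 1, by omega⟩
  have hkn : k < n := by omega
  have hbefore : (walkSum c ε k : ℝ) ≤ y := by
    rcases Nat.eq_zero_or_pos k with rfl | hk0
    · simpa [walkSum_zero] using hy
    · have := notMem_of_lt_hittingBtwn (hk ▸ k.lt_succ_self : k < firstPassage c y ε) hk0
      exact (not_le.mp this).le
  have hstep : ((ε ⟨k, hkn⟩ : ℤ) : ℝ) * c ⟨k, hkn⟩ ≤ B := by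
    have hsign : ((ε ⟨k, hkn⟩ : ℤ) : ℝ) ≤ 1 := by
      rcases ε ⟨k, hkn⟩ with _ | _ | _ <;> norm_num
    exact (mul_le_of_le_one_left (Nat.cast_nonneg _) hsign).trans (hc ⟨k, hkn⟩)
  rw [hk, walkSum_succ c ε hkn]
  push_cast at hstep ⊢
  linarith

theorem firstPassage_reflectAtFirstPassage :
    firstPassage c y (reflectAtFirstPassage c y ε) = firstPassage c y ε :=
  hittingBtwn_eq_of_forall_le_hittingBtwn fun _ hk => by
    simp only [reflectAtFirstPassage, firstPassage, walkSum_reflectFrom_of_le c ε hk]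

theorem reflectAtFirstPassage_involutive (c : Fin n → ℕ) (y : ℝ) :
    Function.Involutive (reflectAtFirstPassage c y) := fun ε => by
  rw [reflectAtFirstPassage, firstPassage_reflectAtFirstPassage]
  exact reflectFrom_involutive _ ε

theorem exists_walkSum_reflectAtFirstPassage_ge
    (h : ∃ k, 1 ≤ k ∧ k ≤ n ∧ y ≤ (walkSum c ε k : ℝ)) :
    ∃ k, 1 ≤ k ∧ k ≤ n ∧ y ≤ (walkSum c (reflectAtFirstPassage c y ε) k : ℝ) := by
  obtain ⟨⟨hτ1, hτn⟩, hτy⟩ := firstPassage_spec h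
  refine ⟨firstPassage c y ε, hτ1, hτn, ?_⟩
  rwa [reflectAtFirstPassage, walkSum_reflectFrom_of_le c ε le_rfl]

theorem walkSum_reflectAtFirstPassage_add_le {B : ℝ} (hy : 0 ≤ y) (hc : ∀ i, (c i : ℝ) ≤ B)
    (h : ∃ k, 1 ≤ k ∧ k ≤ n ∧ y ≤ (walkSum c ε k : ℝ)) :
    (walkSum c (reflectAtFirstPassage c y ε) n : ℝ) + walkSum c ε n ≤ 2 * (y + B) := by
  have hrefl : (walkSum c (reflectAtFirstPassage c y ε) n : ℝ) + walkSum c ε n =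
      2 * walkSum c ε (firstPassage c y ε) := by
    exact_mod_cast walkSum_reflectFrom_add_walkSum c ε (firstPassage_spec h).1.2
  rw [hrefl]
  linarith [walkSum_firstPassage_le hy hc h]

end Walk

/-- A reflection-principle estimate for the maximum of a lazy symmetric
random walk with step sizes in `[A, 4A]`:
`P[M_n ≥ y] ≥ 2 P[S_n ≥ y + 8A + 1]`. -/
theorem walk_maximum_reflection (A : ℝ) (hA : 0 < A) (n : ℕ) (c : Fin n → ℕ)
    (hc : ∀ i_, A ≤ (c i_ : ℝ) ∧ (c i_ : ℝ) ≤ 4 * A)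
    (r : ℝ) (hr0 : 0 < r) (hr1 : r ≤ 1 / 2) (y : ℝ) (hy : 0 ≤ y) :
    2 * (∑ ε : Fin n → SignType,
          if y + 8 * A + 1 ≤ ((walkSum c ε n : ℤ) : ℝ) then signWeight r ε else 0) ≤
      ∑ ε : Fin n → SignType,
        if (∃ k : ℕ, 1 ≤ k ∧ k ≤ n ∧ y ≤ ((walkSum c ε k : ℤ) : ℝ))
        then signWeight r ε else 0 := by
  have hreach : ∀ ε : Fin n → SignType, y + 8 * A + 1 ≤ (walkSum c ε n : ℝ) →
      ∃ k, 1 ≤ k ∧ k ≤ n ∧ y ≤ (walkSum c ε k : ℝ) := by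
    intro ε hε
    refine ⟨n, Nat.one_le_iff_ne_zero.mpr ?_, le_rfl, by linarith⟩
    rintro rfl
    rw [walkSum_zero, Int.cast_zero] at hε
    linarith
  simp only [← Finset.sum_filter]
  rw [two_mul, ← two_nsmul]
  refine Finset.two_nsmul_sum_le_sum_of_injOn (f := reflectAtFirstPassage c y)
    (fun ε hε => ?_) (reflectAtFirstPassage_involutive c y).injective.injOn (fun ε hε => ?_)
    (fun ε _ => signWeight_reflectFrom r _ ε) (fun ε _ => signWeight_nonneg hr0.le hr1 ε)
  · simp only [Finset.mem_filter, Finset.mem_univ, true_and] at hε ⊢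
    exact hreach ε hε
  · simp only [Finset.mem_sdiff, Finset.mem_filter, Finset.mem_univ, true_and] at hε ⊢
    have hbound := walkSum_reflectAtFirstPassage_add_le hy (fun i => (hc i).2) (hreach ε hε)
    exact ⟨exists_walkSum_reflectAtFirstPassage_ge (hreach ε hε), by linarith⟩

end
end
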